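/- With h : ℂ^E → ℂ^E defined by h(a)_{ij} = a_{ki} − a_{il} + a_{lj} − a_{jk} (where ijk and jil are the two faces adjacent to edge ij), and ω̃ the Penner form ω̃(a,ã) = −2 Σ_{ijk∈F}[a_{ij}(ã_{jk}−ã_{ki}) + a_{jk}(ã_{ki}−ã_{ij}) + a_{ki}(ã_{ij}−ã_{jk})], one has ω̃(a,ã) = 2 Σ_{ij∈E} a_{ij}·h(ã)_{ij} = −2 Σ_{ij∈E} ã_{ij}·h(a)_{ij} for all a, ã ∈ ℂ^E. -/
import Mathlib


/-- Penner's skew form on a triangulated surface: `ed f m` (`m : Fin 3`) are the three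
edges `ij, jk, ki` of the face `f` in cyclic order. -/
noncomputable def omegaT {E F : Type*} [Fintype F] (ed : F → Fin 3 → E) (a b : E → ℂ) : ℂ :=
  (-2 : ℂ) * ∑ f : F, ∑ m : Fin 3,
    a (ed f m) * (b (ed f (m + 1)) - b (ed f (m + 2)))

/-- The map `h(a)_{ij} = a_{ki} − a_{il} + a_{lj} − a_{jk}`, where `A e`, `B e` are the two
(face, slot) positions of the edge `e = ij` in the two adjacent faces `ijk` and `jil`:
in each adjacent face the cyclically preceding edge contributes with `+` and the
cyclically following edge with `−`. -/
def hmap {E F : Type*} (ed : F → Fin 3 → E) (A B : E → F × Fin 3) (a : E → ℂ) (e : E) : ℂ :=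
  (a (ed (A e).1 ((A e).2 + 2)) - a (ed (A e).1 ((A e).2 + 1)))
    + (a (ed (B e).1 ((B e).2 + 2)) - a (ed (B e).1 ((B e).2 + 1)))

private lemma sum_split {E F : Type*} [Fintype E] [Fintype F]
    (ed : F → Fin 3 → E) (A B : E → F × Fin 3)
    (hA : ∀ e, ed (A e).1 (A e).2 = e)
    (hB : ∀ e, ed (B e).1 (B e).2 = e)
    (hAB : ∀ e, A e ≠ B e)
    (hcover : ∀ (f : F) (m : Fin 3), A (ed f m) = (f, m) ∨ B (ed f m) = (f, m))
    (g : F × Fin 3 → ℂ) :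
    ∑ p : F × Fin 3, g p = ∑ e : E, (g (A e) + g (B e)) := by
  classical
  have key : ∀ e : E,
      Finset.univ.filter (fun p : F × Fin 3 => ed p.1 p.2 = e) = {A e, B e} := by
    intro e
    ext p
    simp only [Finset.mem_filter, Finset.mem_univ, true_and, Finset.mem_insert,
      Finset.mem_singleton]
    constructor
    · rintro rfl
      rcases hcover p.1 p.2 with h | h
      · left; rw [h]
      · right; rw [h]
    · rintro (rfl | rfl)
      · exact hA e
      · exact hB e
  rw [← Finset.sum_fiberwise_of_maps_to (g := fun p : F × Fin 3 => ed p.1 p.2)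
    (fun p _ => Finset.mem_univ _) g]
  refine Finset.sum_congr rfl fun e _ => ?_
  rw [key e, Finset.sum_pair (fun h => hAB e h)]

private lemma shift3 (f : Fin 3 → ℂ) : ∑ m : Fin 3, f (m + 1) = ∑ m : Fin 3, f m :=
  Fintype.sum_equiv (Equiv.addRight (1 : Fin 3)) _ _ (fun m => rfl)

theorem omegaT_eq_sum_hmap {E F : Type*} [Fintype E] [Fintype F]
    (ed : F → Fin 3 → E) (A B : E → F × Fin 3)
    (hA : ∀ e, ed (A e).1 (A e).2 = e)
    (hB : ∀ e, ed (B e).1 (B e).2 = e)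
    (hAB : ∀ e, A e ≠ B e)
    (hcover : ∀ (f : F) (m : Fin 3), A (ed f m) = (f, m) ∨ B (ed f m) = (f, m))
    (a b : E → ℂ) :
    omegaT ed a b = 2 * ∑ e : E, a e * hmap ed A B b e ∧
    omegaT ed a b = -2 * ∑ e : E, b e * hmap ed A B a e := by
  have base : ∑ f : F, ∑ m : Fin 3, a (ed f m) * (b (ed f (m + 1)) - b (ed f (m + 2)))
      = ∑ p : F × Fin 3, a (ed p.1 p.2) * (b (ed p.1 (p.2 + 1)) - b (ed p.1 (p.2 + 2))) := by
    rw [← Finset.sum_product']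
    rfl
  constructor
  · rw [omegaT, base,
      sum_split ed A B hA hB hAB hcover
        (fun p => a (ed p.1 p.2) * (b (ed p.1 (p.2 + 1)) - b (ed p.1 (p.2 + 2))))]
    rw [Finset.mul_sum, Finset.mul_sum]
    refine Finset.sum_congr rfl fun e _ => ?_
    simp only [hA, hB, hmap]
    ring
  · have swap : ∀ f : F, ∑ m : Fin 3, a (ed f m) * (b (ed f (m + 1)) - b (ed f (m + 2)))
        = ∑ m : Fin 3, b (ed f m) * (a (ed f (m + 2)) - a (ed f (m + 1))) := by
      intro f
      have h1 : ∑ m : Fin 3, a (ed f m) * b (ed f (m + 1))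
          = ∑ m : Fin 3, a (ed f (m + 2)) * b (ed f m) := by
        rw [← shift3 (fun m => a (ed f (m + 2)) * b (ed f m))]
        refine Finset.sum_congr rfl fun m _ => ?_
        have : m + 1 + 2 = m := by rw [add_assoc, show (1:Fin 3)+2 = 0 from rfl, add_zero]
        rw [this]
      have h2 : ∑ m : Fin 3, a (ed f m) * b (ed f (m + 2))
          = ∑ m : Fin 3, a (ed f (m + 1)) * b (ed f m) := by
        rw [← shift3 (fun m => a (ed f m) * b (ed f (m + 2)))]
        refine Finset.sum_congr rfl fun m _ => ?_
        have : m + 1 + 2 = m := by rw [add_assoc, show (1:Fin 3)+2 = 0 from rfl, add_zero]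
        rw [this]
      calc ∑ m : Fin 3, a (ed f m) * (b (ed f (m + 1)) - b (ed f (m + 2)))
          = (∑ m : Fin 3, a (ed f m) * b (ed f (m + 1)))
            - ∑ m : Fin 3, a (ed f m) * b (ed f (m + 2)) := by
            rw [← Finset.sum_sub_distrib]; exact Finset.sum_congr rfl fun m _ => by ring
        _ = (∑ m : Fin 3, a (ed f (m + 2)) * b (ed f m))
            - ∑ m : Fin 3, a (ed f (m + 1)) * b (ed f m) := by rw [h1, h2]
        _ = ∑ m : Fin 3, b (ed f m) * (a (ed f (m + 2)) - a (ed f (m + 1))) := by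
            rw [← Finset.sum_sub_distrib]; exact Finset.sum_congr rfl fun m _ => by ring
    rw [omegaT]
    rw [Finset.sum_congr rfl fun f _ => swap f]
    have base2 : ∑ f : F, ∑ m : Fin 3, b (ed f m) * (a (ed f (m + 2)) - a (ed f (m + 1)))
        = ∑ p : F × Fin 3, b (ed p.1 p.2) * (a (ed p.1 (p.2 + 2)) - a (ed p.1 (p.2 + 1))) := by
      rw [← Finset.sum_product']
      rfl
    rw [base2,
      sum_split ed A B hA hB hAB hcover
        (fun p => b (ed p.1 p.2) * (a (ed p.1 (p.2 + 2)) - a (ed p.1 (p.2 + 1))))]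
    rw [Finset.mul_sum, Finset.mul_sum]
    refine Finset.sum_congr rfl fun e _ => ?_
    simp only [hA, hB, hmap]
    ring
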